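/- arXiv:2205.04938 — 4 statements merged into one kernel-verified Lean document; each statement's English description precedes it below -/
import Mathlib

section
/- Rowmotion on A^ℓ(Q), defined as the composition τ_{x_1} ∘ τ_{x_2} ∘ ⋯ ∘ τ_{x_m} over a linear extension x_1, x_2, ..., x_m of Q, is independent of the choice of linear extension: any two linear extensions of Q give the same composite map on A^ℓ(Q). -/
open scoped Classical

/-- `Q̂`: the poset `Q` with a minimum element `0̂` and a maximum element `1̂` adjoined. -/
abbrev Qhat (Q : Type*) := WithBot (WithTop Q)

/-- The embedding of `Q` into `Q̂`. -/
def emb {Q : Type*} (x : Q) : Qhat Q := ((x : WithTop Q) : Qhat Q)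

/-- `∇_σ(x)`: the minimum of `σ(y)` over elements `y` covering `x` in `Q̂`. -/
noncomputable def nabla {Q : Type*} [PartialOrder Q] (σ : Qhat Q → ℤ) (x : Qhat Q) : ℤ :=
  sInf (σ '' {y | x ⋖ y})

/-- `Δ_σ(x)`: the maximum of `σ(y)` over elements `y` covered by `x` in `Q̂`. -/
noncomputable def delta {Q : Type*} [PartialOrder Q] (σ : Qhat Q → ℤ) (x : Qhat Q) : ℤ :=
  sSup (σ '' {y | y ⋖ x})

/-- The piecewise-linear toggle `τ_x` at an element `x ∈ Q`, acting on maps `Q̂ → ℤ`: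
it replaces the value at `x` by `∇_σ(x) + Δ_σ(x) − σ(x)` and leaves all other values fixed. -/
noncomputable def toggle {Q : Type*} [PartialOrder Q] (x : Q) (σ : Qhat Q → ℤ) :
    Qhat Q → ℤ :=
  fun z => if z = emb x then nabla σ (emb x) + delta σ (emb x) - σ (emb x) else σ z

/-- `σ ∈ A^ℓ(Q)`: an order-preserving map `Q̂ → ℤ` with `σ(0̂) = 0` and `σ(1̂) = ℓ`
(such a map automatically takes values in `{0,…,ℓ}`). -/
def IsQPart {Q : Type*} [PartialOrder Q] (ℓ : ℤ) (σ : Qhat Q → ℤ) : Prop :=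
  Monotone σ ∧ σ ⊥ = 0 ∧ σ ⊤ = ℓ

/-- A linear extension of the finite poset `Q`: a duplicate-free enumeration
`x_1, …, x_m` of all elements of `Q` such that `x_i < x_j` in `Q` implies `i < j`
(equivalently, no later element is below an earlier one). -/
def IsLinearExtension {Q : Type*} [PartialOrder Q] [Fintype Q] (L : List Q) : Prop :=
  L.Nodup ∧ (∀ x : Q, x ∈ L) ∧ L.Pairwise (fun a b => ¬ b < a)

/-- Rowmotion with respect to the enumeration `L = [x_1, …, x_m]`:
the composition `τ_{x_1} ∘ τ_{x_2} ∘ ⋯ ∘ τ_{x_m}` (so `τ_{x_m}` is applied first). -/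
noncomputable def rowList {Q : Type*} [PartialOrder Q] (L : List Q) (σ : Qhat Q → ℤ) :
    Qhat Q → ℤ :=
  L.foldr toggle σ

section Aux

variable {Q : Type*} [PartialOrder Q]

lemma emb_lt_emb_iff {x y : Q} : emb x < emb y ↔ x < y := by
  simp [emb]

lemma emb_injective : Function.Injective (emb (Q := Q)) := by
  intro a b h
  simpa [emb] using h

lemma nabla_congr (σ σ' : Qhat Q → ℤ) (x : Qhat Q)
    (h : ∀ y, x ⋖ y → σ y = σ' y) : nabla σ x = nabla σ' x := by
  unfold nabla
  congr 1
  exact Set.image_congr (fun y hy => h y hy)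

lemma delta_congr (σ σ' : Qhat Q → ℤ) (x : Qhat Q)
    (h : ∀ y, y ⋖ x → σ y = σ' y) : delta σ x = delta σ' x := by
  unfold delta
  congr 1
  exact Set.image_congr (fun y hy => h y hy)

lemma toggle_apply_ne (x : Q) (σ : Qhat Q → ℤ) {z : Qhat Q} (hz : z ≠ emb x) :
    toggle x σ z = σ z := by
  simp [toggle, hz]

lemma toggle_comm {x y : Q} (hxy : x ≠ y) (h1 : ¬ x < y) (h2 : ¬ y < x)
    (σ : Qhat Q → ℤ) : toggle x (toggle y σ) = toggle y (toggle x σ) := by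
  have hxy' : emb x ≠ emb y := fun h => hxy (emb_injective h)
  -- toggle y σ agrees with σ on covers/cocovers of emb x, and at emb x
  have hcov : ∀ w : Qhat Q, emb x ⋖ w → w ≠ emb y := by
    intro w hw he
    exact h1 (emb_lt_emb_iff.mp (he ▸ hw.lt))
  have hcocov : ∀ w : Qhat Q, w ⋖ emb x → w ≠ emb y := by
    intro w hw he
    exact h2 (emb_lt_emb_iff.mp (he ▸ hw.lt))
  have hcovx : ∀ w : Qhat Q, emb y ⋖ w → w ≠ emb x := by
    intro w hw he
    exact h2 (emb_lt_emb_iff.mp (he ▸ hw.lt))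
  have hcocovx : ∀ w : Qhat Q, w ⋖ emb y → w ≠ emb x := by
    intro w hw he
    exact h1 (emb_lt_emb_iff.mp (he ▸ hw.lt))
  have hn : nabla (toggle y σ) (emb x) = nabla σ (emb x) :=
    nabla_congr _ _ _ (fun w hw => toggle_apply_ne y σ (hcov w hw))
  have hd : delta (toggle y σ) (emb x) = delta σ (emb x) :=
    delta_congr _ _ _ (fun w hw => toggle_apply_ne y σ (hcocov w hw))
  have hn' : nabla (toggle x σ) (emb y) = nabla σ (emb y) :=
    nabla_congr _ _ _ (fun w hw => toggle_apply_ne x σ (hcovx w hw))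
  have hd' : delta (toggle x σ) (emb y) = delta σ (emb y) :=
    delta_congr _ _ _ (fun w hw => toggle_apply_ne x σ (hcocovx w hw))
  funext z
  by_cases hzx : z = emb x
  · subst hzx
    rw [show toggle x (toggle y σ) (emb x)
        = nabla (toggle y σ) (emb x) + delta (toggle y σ) (emb x) - toggle y σ (emb x) by
        simp [toggle]]
    rw [hn, hd, toggle_apply_ne y σ hxy',
      toggle_apply_ne y (toggle x σ) hxy']
    simp [toggle]
  · by_cases hzy : z = emb y
    · subst hzy
      rw [toggle_apply_ne x (toggle y σ) hzx]
      rw [show toggle y σ (emb y)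
          = nabla σ (emb y) + delta σ (emb y) - σ (emb y) by simp [toggle]]
      rw [show toggle y (toggle x σ) (emb y)
          = nabla (toggle x σ) (emb y) + delta (toggle x σ) (emb y) - toggle x σ (emb y) by
          simp [toggle]]
      rw [hn', hd', toggle_apply_ne x σ (Ne.symm hxy')]
    · rw [toggle_apply_ne x _ hzx, toggle_apply_ne y _ hzy,
        toggle_apply_ne y _ hzy, toggle_apply_ne x _ hzx]

lemma rowList_bubble (x : Q) (l₁ l₂ : List Q)
    (h : ∀ a ∈ l₁, a ≠ x ∧ ¬ a < x ∧ ¬ x < a) (σ : Qhat Q → ℤ) :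
    rowList (l₁ ++ x :: l₂) σ = rowList (x :: (l₁ ++ l₂)) σ := by
  induction l₁ with
  | nil => rfl
  | cons a t ih =>
    have ha := h a (List.mem_cons_self)
    have ht : ∀ b ∈ t, b ≠ x ∧ ¬ b < x ∧ ¬ x < b :=
      fun b hb => h b (List.mem_cons_of_mem a hb)
    show toggle a (rowList (t ++ x :: l₂) σ) = toggle x (rowList (a :: (t ++ l₂)) σ)
    rw [ih ht]
    show toggle a (toggle x (rowList (t ++ l₂) σ))
        = toggle x (toggle a (rowList (t ++ l₂) σ))
    exact toggle_comm ha.1 ha.2.1 ha.2.2 _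

lemma rowList_perm : ∀ (L L' : List Q), L.Perm L' → L.Nodup →
    L.Pairwise (fun a b => ¬ b < a) → L'.Pairwise (fun a b => ¬ b < a) →
    ∀ σ : Qhat Q → ℤ, rowList L σ = rowList L' σ := by
  intro L
  induction L with
  | nil => intro L' hp _ _ _ σ; rw [hp.nil_eq]
  | cons x t ih =>
    intro L' hp hnd hpw hpw' σ
    have hx : x ∈ L' := hp.mem_iff.mp (List.mem_cons_self)
    obtain ⟨l₁, l₂, rfl⟩ := List.append_of_mem hx
    have hnd' : (l₁ ++ x :: l₂).Nodup := hp.nodup hnd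
    have hxnotl₁ : x ∉ l₁ := by
      intro hmem
      exact (List.disjoint_of_nodup_append hnd') hmem (List.mem_cons_self)
    have hperm : t.Perm (l₁ ++ l₂) := by
      have h1 : (x :: t).Perm (x :: (l₁ ++ l₂)) :=
        hp.trans List.perm_middle
      exact h1.cons_inv
    have hincomp : ∀ a ∈ l₁, a ≠ x ∧ ¬ a < x ∧ ¬ x < a := by
      intro a ha
      have hax : a ≠ x := fun h => hxnotl₁ (h ▸ ha)
      have h1 : ¬ x < a := by
        rw [List.pairwise_append] at hpw'
        exact hpw'.2.2 a ha x (List.mem_cons_self)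
      have h2 : ¬ a < x := by
        have hat : a ∈ t := by
          have : a ∈ x :: t := hp.mem_iff.mpr (List.mem_append_left _ ha)
          rcases List.mem_cons.mp this with h | h
          · exact absurd h hax
          · exact h
        exact (List.pairwise_cons.mp hpw).1 a hat
      exact ⟨hax, h2, h1⟩
    rw [rowList_bubble x l₁ l₂ hincomp σ]
    have hsub : (l₁ ++ l₂).Sublist (l₁ ++ x :: l₂) :=
      List.Sublist.append_left (List.sublist_cons_self x l₂) l₁
    have hpw'' : (l₁ ++ l₂).Pairwise (fun a b => ¬ b < a) := hpw'.sublist hsub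
    show toggle x (rowList t σ) = toggle x (rowList (l₁ ++ l₂) σ)
    rw [ih (l₁ ++ l₂) hperm (List.nodup_cons.mp hnd).2
      (List.pairwise_cons.mp hpw).2 hpw'' σ]

end Aux

/-- rowmotion on `A^ℓ(Q)` is independent of the choice of linear extension:
any two linear extensions of `Q` give the same composite map on `A^ℓ(Q)`. -/
theorem rowmotion_well_defined {Q : Type*} [PartialOrder Q] [Fintype Q]
    (ℓ : ℤ) (hℓ : 1 ≤ ℓ) (L L' : List Q)
    (hL : IsLinearExtension L) (hL' : IsLinearExtension L')
    (σ : Qhat Q → ℤ) (hσ : IsQPart ℓ σ) :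
    rowList L σ = rowList L' σ := by
  obtain ⟨hnd, hmem, hpw⟩ := hL
  obtain ⟨hnd', hmem', hpw'⟩ := hL'
  have hperm : L.Perm L' :=
    (List.perm_ext_iff_of_nodup hnd hnd').mpr
      (fun a => ⟨fun _ => hmem' a, fun _ => hmem a⟩)
  exact rowList_perm L L' hperm hnd hpw hpw' σ
end

section
/- Let P be a finite graded poset of rank n and let q > n+1. Then the gamma poset Γ(P, R^q) is isomorphic as a poset to P × [q−n−1], via the map sending (p,k) to (p, q − n + rank(p) − k). -/
/-- The elements of the gamma poset `Γ(P, R^q)` for a graded poset `P` of rank `n` with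
rank function `rk`: pairs `(p,k)` with `k ∈ R^q(p)* = {rank(p)+1, …, q−n+rank(p)−1}`
(the set `R^q(p) = {rank(p)+1, …, q−n+rank(p)}` with its largest element removed). -/
abbrev GammaEl (P : Type*) (rk : P → ℕ) (q n : ℕ) :=
  {pk : P × ℤ // (rk pk.1 : ℤ) + 1 ≤ pk.2 ∧ pk.2 ≤ (q : ℤ) - n + rk pk.1 - 1}

/-- The covering relation of `Γ(P, R^q)`: `(p₁,k₁) ⋖ (p₂,k₂)` iff either
`p₁ = p₂` and `k₁ = k₂ + 1`, or `p₁ ⋖ p₂` in `P` and `k₁ = k₂ − 1`. -/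
def covG {P : Type*} [PartialOrder P] {rk : P → ℕ} {q n : ℕ}
    (a b : GammaEl P rk q n) : Prop :=
  (a.1.1 = b.1.1 ∧ a.1.2 = b.1.2 + 1) ∨ (a.1.1 ⋖ b.1.1 ∧ a.1.2 = b.1.2 - 1)

/-- The chain `[m]` with elements `1, …, m`, as a subposet of `ℤ`. -/
abbrev ChainInt (m : ℕ) := {i : ℤ // 1 ≤ i ∧ i ≤ (m : ℤ)}

/-- The map `(p,k) ↦ (p, q − n + rank(p) − k)` from `Γ(P, R^q)` to `P × [q−n−1]`. -/
def gammaToProd {P : Type*} {rk : P → ℕ} {q n : ℕ} (hq : n + 1 < q)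
    (x : GammaEl P rk q n) : P × ChainInt (q - n - 1) :=
  (x.1.1, ⟨(q : ℤ) - n + rk x.1.1 - x.1.2, by
    have h1 := x.2.1
    have h2 := x.2.2
    constructor <;> omega⟩)

section Aux

variable {P : Type*} [PartialOrder P] {rk : P → ℕ} {q n : ℕ}

/-- Descend in the `k`-coordinate at a fixed poset element. -/
lemma gamma_descend : ∀ m : ℕ, ∀ a b : GammaEl P rk q n,
    a.1.1 = b.1.1 → a.1.2 = b.1.2 + m → Relation.ReflTransGen covG a b := by
  intro m
  induction m with
  | zero =>
    intro a b h1 h2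
    have : a = b := Subtype.ext (Prod.ext h1 (by push_cast at h2; omega))
    exact this ▸ Relation.ReflTransGen.refl
  | succ m ih =>
    intro a b h1 h2
    have hb1 := b.2.1
    have hb2 := b.2.2
    have ha1 := a.2.1
    have ha2 := a.2.2
    have hrk : (rk a.1.1 : ℤ) = rk b.1.1 := by rw [h1]
    push_cast at h2
    refine Relation.ReflTransGen.head
      (b := ⟨(a.1.1, a.1.2 - 1), by show (rk a.1.1 : ℤ) + 1 ≤ a.1.2 - 1; omega,
        by show a.1.2 - 1 ≤ (q : ℤ) - n + rk a.1.1 - 1; omega⟩)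
      (Or.inl ⟨rfl, by ring⟩) (ih _ b h1 (by push_cast; omega))

/-- Climb a cover chain in `P` while adjusting `k`. -/
lemma gamma_climb (hcov : ∀ p p' : P, p ⋖ p' → rk p' = rk p + 1) :
    ∀ p₁ p₂ : P, Relation.ReflTransGen (· ⋖ ·) p₁ p₂ →
    ∀ a b : GammaEl P rk q n, a.1.1 = p₁ → b.1.1 = p₂ →
    (rk p₁ : ℤ) - a.1.2 ≤ (rk p₂ : ℤ) - b.1.2 → Relation.ReflTransGen covG a b := by
  intro p₁ p₂ hchain
  induction hchain with
  | refl =>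
    intro a b ha hb hle
    have h1 : a.1.1 = b.1.1 := ha.trans hb.symm
    have hrk : (rk a.1.1 : ℤ) = rk b.1.1 := by rw [h1]
    exact gamma_descend (a.1.2 - b.1.2).toNat a b h1 (by omega)
  | @tail p p₂ hpp hcv ih =>
    intro a b ha hb hle
    have hb1 := b.2.1
    have hb2 := b.2.2
    have hrk : rk p₂ = rk p + 1 := hcov p p₂ hcv
    have hbrk : rk b.1.1 = rk p₂ := by rw [hb]
    -- intermediate element (p, b.k - 1)
    refine Relation.ReflTransGen.tail
      (ih a ⟨(p, b.1.2 - 1), ?_, ?_⟩ ha rfl ?_) ?_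
    · show (rk p : ℤ) + 1 ≤ b.1.2 - 1
      omega
    · show b.1.2 - 1 ≤ (q : ℤ) - n + rk p - 1
      omega
    · show (rk p₁ : ℤ) - a.1.2 ≤ (rk p : ℤ) - (b.1.2 - 1)
      omega
    · exact Or.inr ⟨hb ▸ hcv, rfl⟩

end Aux

/-- for a finite graded poset `P` of rank `n` (covers increase rank by one,
minimal elements have rank `0`, maximal elements have rank `n`) and `q > n + 1`, the
gamma poset `Γ(P, R^q)` (whose order is the reflexive-transitive closure of its covering
relation) is isomorphic as a poset to `P × [q−n−1]`, via `(p,k) ↦ (p, q−n+rank(p)−k)`. -/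
theorem gamma_iso_prod
    {P : Type*} [PartialOrder P] [Fintype P]
    (rk : P → ℕ) (n q : ℕ) (hq : n + 1 < q)
    (hcov : ∀ p p' : P, p ⋖ p' → rk p' = rk p + 1)
    (hmin : ∀ p : P, IsMin p → rk p = 0)
    (hmax : ∀ p : P, IsMax p → rk p = n) :
    Function.Bijective (gammaToProd (rk := rk) hq) ∧
      ∀ a b : GammaEl P rk q n,
        Relation.ReflTransGen covG a b ↔ gammaToProd hq a ≤ gammaToProd hq b := by
  classical
  letI : LocallyFiniteOrder P := Fintype.toLocallyFiniteOrder
  constructor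
  · constructor
    · -- injective
      intro x y hxy
      rw [Prod.ext_iff] at hxy
      obtain ⟨h1', h2'⟩ := hxy
      have h1 : x.1.1 = y.1.1 := h1'
      have h2 : (q : ℤ) - n + rk x.1.1 - x.1.2 = (q : ℤ) - n + rk y.1.1 - y.1.2 :=
        congrArg Subtype.val h2'
      have hrk : (rk x.1.1 : ℤ) = rk y.1.1 := by rw [h1]
      exact Subtype.ext (Prod.ext h1 (by omega))
    · -- surjective
      rintro ⟨p, i, hi1, hi2⟩
      refine ⟨⟨(p, (q : ℤ) - n + rk p - i), ?_, ?_⟩, ?_⟩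
      · dsimp; omega
      · dsimp; omega
      · exact Prod.ext rfl (Subtype.ext (by dsimp [gammaToProd]; ring))
  · intro a b
    constructor
    · -- forward: each covG step is ≤
      intro h
      induction h with
      | refl => exact le_refl _
      | @tail c d hac hcd ih =>
        refine le_trans ih ?_
        rcases hcd with ⟨h1, h2⟩ | ⟨h1, h2⟩
        · refine Prod.mk_le_mk.mpr ⟨le_of_eq h1, ?_⟩
          have hrk : (rk c.1.1 : ℤ) = rk d.1.1 := by rw [h1]
          show (q : ℤ) - n + rk c.1.1 - c.1.2 ≤ (q : ℤ) - n + rk d.1.1 - d.1.2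
          omega
        · refine Prod.mk_le_mk.mpr ⟨h1.le, ?_⟩
          have hrk : rk d.1.1 = rk c.1.1 + 1 := hcov _ _ h1
          show (q : ℤ) - n + rk c.1.1 - c.1.2 ≤ (q : ℤ) - n + rk d.1.1 - d.1.2
          omega
    · -- backward
      intro h
      obtain ⟨h1, h2⟩ := Prod.mk_le_mk.mp h
      have h2' : (q : ℤ) - n + rk a.1.1 - a.1.2 ≤ (q : ℤ) - n + rk b.1.1 - b.1.2 := h2
      exact gamma_climb hcov a.1.1 b.1.1
        (le_iff_reflTransGen_covBy.mp h1) a b rfl rfl (by omega)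
end

section
/- Let P be a finite graded poset of rank n and q > n+1, and let α, β: P → ℤ with restriction function R_α^β. Then the poset Γ(P, R^q) is column-adjacent: whenever (p₁,k₁) ⋖ (p₂,k₂) in Γ(P, R^q), one has |k₂ − k₁| = 1. -/
open scoped Classical

/-- The restriction function `R^q` on a graded poset `P` of rank `n` with rank function
`rk`: `R^q(p) = {rank(p)+1, rank(p)+2, …, q−n+rank(p)}`. -/
def Rq {P : Type*} (rk : P → ℕ) (q n : ℕ) (p : P) : Set ℤ :=
  Set.Icc ((rk p : ℤ) + 1) ((q : ℤ) - n + rk p)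

/-- `R(p)_{>k}`: the smallest label of `R(p)` that is larger than `k`. -/
noncomputable def Rnext {P : Type*} (rk : P → ℕ) (q n : ℕ) (p : P) (k : ℤ) : ℤ :=
  sInf {j | j ∈ Rq rk q n p ∧ k < j}

/-- `R(p)_{<k}`: the largest label of `R(p)` that is less than `k`. -/
noncomputable def Rprev {P : Type*} (rk : P → ℕ) (q n : ℕ) (p : P) (k : ℤ) : ℤ :=
  sSup {j | j ∈ Rq rk q n p ∧ j < k}

/-- `max R(p)`. -/
noncomputable def Rmax {P : Type*} (rk : P → ℕ) (q n : ℕ) (p : P) : ℤ :=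
  sSup (Rq rk q n p)

/-- The covering relation of the gamma poset `Γ(P, R^q)` (Definition 2.11 of DSV2019):
`(p₁,k₁) ⋖ (p₂,k₂)` iff either (1) `p₁ = p₂` and `k₁` is the next-largest label of
`R(p₁)` after `k₂`, or (2) `p₁ ⋖ p₂` in `P`, `k₁` is the largest label of `R(p₁)` below
`k₂` with `k₁ ≠ max R(p₁)`, and no larger label `k ∈ R(p₂)` has `k₁` as the largest
label of `R(p₁)` below it. -/
def covGamma {P : Type*} [PartialOrder P] (rk : P → ℕ) (q n : ℕ)
    (p₁ : P) (k₁ : ℤ) (p₂ : P) (k₂ : ℤ) : Prop :=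
  (p₁ = p₂ ∧ Rnext rk q n p₁ k₂ = k₁) ∨
  (p₁ ⋖ p₂ ∧ k₁ = Rprev rk q n p₁ k₂ ∧ k₁ ≠ Rmax rk q n p₁ ∧
    ¬ ∃ k, k ∈ Rq rk q n p₂ ∧ k₂ < k ∧ Rprev rk q n p₁ k = k₁)

lemma Rmax_eq' {P : Type*} (rk : P → ℕ) (q n : ℕ) (p : P) (hq : n + 1 < q) :
    Rmax rk q n p = (q : ℤ) - n + rk p := by
  have h : (n : ℤ) + 1 < q := by exact_mod_cast hq
  exact csSup_Icc (by omega)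

lemma Rnext_eq' {P : Type*} (rk : P → ℕ) (q n : ℕ) (p : P) (k : ℤ) (hq : n + 1 < q)
    (hk : k ∈ Rq rk q n p) (hne : k ≠ Rmax rk q n p) :
    Rnext rk q n p k = k + 1 := by
  have hq' : (n : ℤ) + 1 < q := by exact_mod_cast hq
  rw [Rmax_eq' rk q n p hq] at hne
  rw [Rq, Set.mem_Icc] at hk
  refine IsLeast.csInf_eq ⟨⟨?_, by omega⟩, ?_⟩
  · rw [Rq, Set.mem_Icc]; omega
  · rintro j ⟨-, hj⟩; omega

/-- for a finite graded poset `P` of rank `n` and `q > n+1`, the gamma poset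
`Γ(P, R^q)` is column-adjacent: whenever `(p₁,k₁) ⋖ (p₂,k₂)` in `Γ(P, R^q)` (with
`k₁ ∈ R^q(p₁)*` and `k₂ ∈ R^q(p₂)*`), one has `|k₂ − k₁| = 1`. -/
theorem gamma_column_adjacent
    {P : Type*} [PartialOrder P] [Fintype P]
    (rk : P → ℕ) (n q : ℕ) (hq : n + 1 < q)
    (hcov : ∀ p p' : P, p ⋖ p' → rk p' = rk p + 1)
    (hmin : ∀ p : P, IsMin p → rk p = 0)
    (hmax : ∀ p : P, IsMax p → rk p = n)
    (α β : P → ℤ)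
    (p₁ p₂ : P) (k₁ k₂ : ℤ)
    (h₁ : k₁ ∈ Rq rk q n p₁ ∧ k₁ ≠ Rmax rk q n p₁)
    (h₂ : k₂ ∈ Rq rk q n p₂ ∧ k₂ ≠ Rmax rk q n p₂)
    (hcover : covGamma rk q n p₁ k₁ p₂ k₂) :
    |k₂ - k₁| = 1 := by
  obtain ⟨hk₂, hne₂⟩ := h₂
  rcases hcover with ⟨rfl, hnext⟩ | ⟨hc, hprev, -, -⟩
  · rw [Rnext_eq' rk q n p₁ k₂ hq hk₂ hne₂] at hnext
    rw [show k₂ - k₁ = -1 by omega]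
    norm_num
  · have hr := hcov _ _ hc
    have hq' : (n : ℤ) + 1 < q := by exact_mod_cast hq
    rw [Rmax_eq' rk q n p₂ hq] at hne₂
    rw [Rq, Set.mem_Icc, hr] at hk₂
    push_cast [hr] at hk₂ hne₂
    have : Rprev rk q n p₁ k₂ = k₂ - 1 := by
      refine IsGreatest.csSup_eq ⟨⟨?_, by omega⟩, ?_⟩
      · rw [Rq, Set.mem_Icc]; constructor <;> omega
      · rintro j ⟨hj, hj'⟩; omega
    rw [this] at hprev
    rw [show k₂ - k₁ = 1 by omega]
    norm_num
end

section
/- For (i,j) ∈ [a] × [b], let β(i,j) = b + 2i − 1 and let R^β be the induced consistent restriction function, so that R^β(i,j) = {i+j−1, i+j, ..., 2i+j−1}. Then the gamma poset Γ([a] × [b], R^β) is isomorphic as a poset to ▽_a × [b], where ▽_a = {(i,u) ∈ [a]×[a] : a−i+1 ≤ u ≤ a}, via the map ((i,j),k) ↦ ((i, i+j−k+a−1), j). -/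
/-- The chain `[a]` with elements `1, …, a`, as a subposet of `ℤ`. -/
abbrev Idx (a : ℕ) := {i : ℤ // 1 ≤ i ∧ i ≤ (a : ℤ)}

/-- The elements of the gamma poset `Γ([a]×[b], R^β)` for the flags `β(i,j) = b+2i−1`:
triples `((i,j),k)` with `k ∈ R^β(i,j)* = {i+j−1, …, 2i+j−2}`. -/
abbrev FlagGammaEl (a b : ℕ) :=
  {x : (Idx a × Idx b) × ℤ //
    x.1.1.1 + x.1.2.1 - 1 ≤ x.2 ∧ x.2 ≤ 2 * x.1.1.1 + x.1.2.1 - 2}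

/-- The covering relation of `Γ([a]×[b], R^β)`: `((i₁,j₁),k₁) ⋖ ((i₂,j₂),k₂)` iff
either the cells agree and `k₁ = k₂ + 1`, or `(i₁,j₁) ⋖ (i₂,j₂)` in `[a]×[b]`
and `k₁ + 1 = k₂`. -/
def covFG {a b : ℕ} (x y : FlagGammaEl a b) : Prop :=
  (x.1.1 = y.1.1 ∧ x.1.2 = y.1.2 + 1) ∨ (x.1.1 ⋖ y.1.1 ∧ x.1.2 + 1 = y.1.2)

/-- The triangle-shaped poset `▽_a = {(i,u) ∈ [a]×[a] : a−i+1 ≤ u ≤ a}`, with the order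
induced from `[a]×[a]`. -/
abbrev Tri (a : ℕ) := {x : Idx a × Idx a // (a : ℤ) - x.1.1 + 1 ≤ x.2.1}

/-- The map `((i,j),k) ↦ ((i, i+j−k+a−1), j)` from `Γ([a]×[b], R^β)` to `▽_a × [b]`. -/
def flagGammaToTri {a b : ℕ} (x : FlagGammaEl a b) : Tri a × Idx b :=
  (⟨(x.1.1.1, ⟨x.1.1.1.1 + x.1.1.2.1 - x.1.2 + a - 1, by
      have hi := x.1.1.1.2
      have hj := x.1.1.2.2
      have hk := x.2
      constructor <;> omega⟩), by
    show (a : ℤ) - x.1.1.1.1 + 1 ≤ x.1.1.1.1 + x.1.1.2.1 - x.1.2 + a - 1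
    have hk := x.2
    omega⟩, x.1.1.2)

lemma idx_covBy {a : ℕ} (x y : Idx a) (h : y.1 = x.1 + 1) : x ⋖ y := by
  constructor
  · exact Subtype.mk_lt_mk.2 (by omega)
  · intro c hc1 hc2
    rw [Subtype.mk_lt_mk] at hc1 hc2
    omega

lemma le_iff_tri {a b : ℕ} (x y : FlagGammaEl a b) :
    flagGammaToTri x ≤ flagGammaToTri y ↔
      x.1.1.1.1 ≤ y.1.1.1.1 ∧
      x.1.1.1.1 + x.1.1.2.1 - x.1.2 ≤ y.1.1.1.1 + y.1.1.2.1 - y.1.2 ∧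
      x.1.1.2.1 ≤ y.1.1.2.1 := by
  simp only [flagGammaToTri, Prod.le_def, Subtype.mk_le_mk, Subtype.coe_le_coe]
  constructor
  · rintro ⟨⟨h1, h2⟩, h3⟩
    refine ⟨h1, by omega, h3⟩
  · rintro ⟨h1, h2, h3⟩
    exact ⟨⟨h1, by omega⟩, h3⟩

lemma cov_le {a b : ℕ} (x y : FlagGammaEl a b) (h : covFG x y) :
    flagGammaToTri x ≤ flagGammaToTri y := by
  rw [le_iff_tri]
  rcases h with ⟨hcell, hk⟩ | ⟨hcov, hk⟩
  · have h1 : x.1.1.1.1 = y.1.1.1.1 := by rw [hcell]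
    have h2 : x.1.1.2.1 = y.1.1.2.1 := by rw [hcell]
    refine ⟨by omega, by omega, by omega⟩
  · rcases Prod.mk_covBy_mk_iff.1 (by simpa using hcov) with ⟨hc, he⟩ | ⟨hc, he⟩
    · have h1 : x.1.1.1.1 < y.1.1.1.1 := hc.lt
      have h2 : x.1.1.2.1 = y.1.1.2.1 := by rw [he]
      refine ⟨by omega, by omega, by omega⟩
    · have h1 : x.1.1.2.1 < y.1.1.2.1 := hc.lt
      have h2 : x.1.1.1.1 = y.1.1.1.1 := by rw [he]
      refine ⟨by omega, by omega, by omega⟩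

lemma reach {a b : ℕ} : ∀ n : ℕ, ∀ x y : FlagGammaEl a b,
    x.1.1.1.1 ≤ y.1.1.1.1 →
    x.1.1.2.1 ≤ y.1.1.2.1 →
    x.1.1.1.1 + x.1.1.2.1 - x.1.2 ≤ y.1.1.1.1 + y.1.1.2.1 - y.1.2 →
    n = ((y.1.1.1.1 - x.1.1.1.1) + (y.1.1.2.1 - x.1.1.2.1) +
      ((y.1.1.1.1 + y.1.1.2.1 - y.1.2) - (x.1.1.1.1 + x.1.1.2.1 - x.1.2))).toNat →
    Relation.ReflTransGen covFG x y := by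
  intro n
  induction n with
  | zero =>
    intro x y h1 h2 h3 hn
    have e1 : x.1.1.1.1 = y.1.1.1.1 := by omega
    have e2 : x.1.1.2.1 = y.1.1.2.1 := by omega
    have e3 : x.1.2 = y.1.2 := by omega
    have : x = y := by
      apply Subtype.ext
      apply Prod.ext
      · apply Prod.ext <;> exact Subtype.ext (by assumption)
      · exact e3
    rw [this]
  | succ n ih =>
    rintro ⟨⟨⟨⟨i, hia⟩, ⟨j, hjb⟩⟩, k⟩, hk⟩ y h1 h2 h3 hn
    obtain ⟨⟨⟨⟨i', hia'⟩, ⟨j', hjb'⟩⟩, k'⟩, hk'⟩ := y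
    simp only at h1 h2 h3 hn hk hk'
    by_cases hi : i < i'
    · refine Relation.ReflTransGen.head (b := ⟨((⟨i + 1, by omega⟩, ⟨j, hjb⟩), k + 1),
        by constructor <;> simp <;> omega⟩) ?_ (ih _ _ ?_ ?_ ?_ ?_)
      · exact Or.inr ⟨Prod.mk_covBy_mk_iff.2 (Or.inl ⟨idx_covBy _ _ rfl, rfl⟩), rfl⟩
      all_goals first | omega | (simp; omega)
    · by_cases hj : j < j'
      · refine Relation.ReflTransGen.head (b := ⟨((⟨i, hia⟩, ⟨j + 1, by omega⟩), k + 1),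
          by constructor <;> simp <;> omega⟩) ?_ (ih _ _ ?_ ?_ ?_ ?_)
        · exact Or.inr ⟨Prod.mk_covBy_mk_iff.2 (Or.inr ⟨idx_covBy _ _ rfl, rfl⟩), rfl⟩
        all_goals first | omega | (simp; omega)
      · refine Relation.ReflTransGen.head (b := ⟨((⟨i, hia⟩, ⟨j, hjb⟩), k - 1),
          by constructor <;> simp <;> omega⟩) ?_ (ih _ _ ?_ ?_ ?_ ?_)
        · exact Or.inl ⟨rfl, show k = k - 1 + 1 by omega⟩
        all_goals first | omega | (simp; omega)

/-- for the flags `β(i,j) = b + 2i − 1` on `[a]×[b]`, with induced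
restriction function `R^β(i,j) = {i+j−1, …, 2i+j−1}`, the gamma poset
`Γ([a]×[b], R^β)` (whose order is the reflexive-transitive closure of its covering
relation) is isomorphic as a poset to `▽_a × [b]`, via `((i,j),k) ↦ ((i, i+j−k+a−1), j)`. -/
theorem flagGamma_iso_tri (a b : ℕ) (ha : 0 < a) (hb : 0 < b) :
    Function.Bijective (flagGammaToTri (a := a) (b := b)) ∧
      ∀ x y : FlagGammaEl a b,
        Relation.ReflTransGen covFG x y ↔ flagGammaToTri x ≤ flagGammaToTri y := by
  constructor
  · constructor
    · intro x y h
      have h1 : (flagGammaToTri x).1.1.1.1 = (flagGammaToTri y).1.1.1.1 := by rw [h]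
      have h2 : (flagGammaToTri x).1.1.2.1 = (flagGammaToTri y).1.1.2.1 := by rw [h]
      have h3 : (flagGammaToTri x).2.1 = (flagGammaToTri y).2.1 := by rw [h]
      simp only [flagGammaToTri] at h1 h2 h3
      apply Subtype.ext
      apply Prod.ext
      · apply Prod.ext <;> exact Subtype.ext (by omega)
      · omega
    · rintro ⟨⟨⟨⟨i, hia⟩, ⟨u, hua⟩⟩, htri⟩, ⟨j, hjb⟩⟩
      simp only at htri
      refine ⟨⟨((⟨i, hia⟩, ⟨j, hjb⟩), i + j + (a : ℤ) - 1 - u),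
        by constructor <;> simp <;> omega⟩, ?_⟩
      simp only [flagGammaToTri]
      apply Prod.ext
      · apply Subtype.ext
        apply Prod.ext
        · rfl
        · exact Subtype.ext (by simp; omega)
      · rfl
  · intro x y
    constructor
    · intro h
      induction h with
      | refl => exact le_refl _
      | tail _ hc ih => exact le_trans ih (cov_le _ _ hc)
    · intro h
      rw [le_iff_tri] at h
      exact reach _ x y h.1 h.2.2 h.2.1 rfl
end
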